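/- A satisfaction system Λ = (L, 𝔐, ⊨) is reception-compatible (i.e., FRsups(Mod(B) ∪ M, Λ) ≠ ∅ for every finite B ⊆ L and every M ⊆ 𝔐) if and only if for every M ⊆ 𝔐 either (i) M ∈ FRsets(Λ), or (ii) M has an immediate successor in the poset (FRsets(Λ) ∪ {M}, ⊊), or (iii) there is no M' ∈ FRsets(Λ) with M' ⊆ M. -/

import Mathlib

variable {α β : Type*}

def ModelsOf (sat : β → Set α → Prop) (B : Set α) : Set β := {m | sat m B}

def FRsets (sat : β → Set α → Prop) : Set (Set β) :=
  {X | ∃ B : Set α, B.Finite ∧ ModelsOf sat B = X}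

def FRsubs (sat : β → Set α → Prop) (M : Set β) : Set (Set β) :=
  {X | X ∈ FRsets sat ∧ X ⊆ M ∧ ¬ ∃ Y ∈ FRsets sat, X ⊂ Y ∧ Y ⊆ M}

def FRsups (sat : β → Set α → Prop) (M : Set β) : Set (Set β) :=
  {X | X ∈ FRsets sat ∧ M ⊆ X ∧ ¬ ∃ Y ∈ FRsets sat, M ⊆ Y ∧ Y ⊂ X}

/-! When `M` is not finitely representable, the immediate successors of `M` in `FRsets ∪ {M}` are
exactly the elements of `FRsups M`. The sets `Mod(B) ∪ M` with `B` finite are exactly the sets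
containing a finitely representable set, so both sides of the equivalence say, set by set, the
same thing. -/

def IsImmediateSucc {P : Type*} [Preorder P] (S : Set P) (m x : P) : Prop :=
  x ∈ S ∧ m < x ∧ ¬ ∃ z ∈ S, m < z ∧ z < x

theorem isImmediateSucc_union_singleton_iff {P : Type*} [PartialOrder P] {F : Set P} {m x : P}
    (hm : m ∉ F) :
    IsImmediateSucc (F ∪ {m}) m x ↔ x ∈ F ∧ m ≤ x ∧ ¬ ∃ y ∈ F, m ≤ y ∧ y < x := by
  constructor
  · rintro ⟨hx | hx, hmx, hnot⟩
    · refine ⟨hx, hmx.le, fun ⟨y, hy, hmy, hyx⟩ => hnot ⟨y, .inl hy, ?_, hyx⟩⟩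
      exact hmy.lt_of_ne (ne_of_mem_of_not_mem hy hm).symm
    · exact (hmx.ne' hx).elim
  · rintro ⟨hx, hmx, hnot⟩
    refine ⟨.inl hx, hmx.lt_of_ne (ne_of_mem_of_not_mem hx hm).symm, ?_⟩
    rintro ⟨z, hz | hz, hmz, hzx⟩
    · exact hnot ⟨z, hz, hmz.le, hzx⟩
    · exact hmz.ne' hz

theorem modelsOf_mem_FRsets (sat : β → Set α → Prop) {B : Set α} (hB : B.Finite) :
    ModelsOf sat B ∈ FRsets sat :=
  ⟨B, hB, rfl⟩

theorem self_mem_FRsups {sat : β → Set α → Prop} {M : Set β} (hM : M ∈ FRsets sat) :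
    M ∈ FRsups sat M :=
  ⟨hM, subset_rfl, fun ⟨_, _, hMY, hYM⟩ => hYM.not_subset hMY⟩

theorem mem_FRsups_iff_isImmediateSucc {sat : β → Set α → Prop} {M X : Set β}
    (hM : M ∉ FRsets sat) :
    X ∈ FRsups sat M ↔ IsImmediateSucc (FRsets sat ∪ {M}) M X :=
  (isImmediateSucc_union_singleton_iff hM).symm

theorem FRsups_nonempty_iff {sat : β → Set α → Prop} {M : Set β} :
    (FRsups sat M).Nonempty ↔
      M ∈ FRsets sat ∨ ∃ X, IsImmediateSucc (FRsets sat ∪ {M}) M X := by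
  by_cases hM : M ∈ FRsets sat
  · exact iff_of_true ⟨M, self_mem_FRsups hM⟩ (.inl hM)
  · simp only [Set.Nonempty, mem_FRsups_iff_isImmediateSucc hM, hM, false_or]

theorem forall_FRsups_modelsOf_union_nonempty_iff {sat : β → Set α → Prop} :
    (∀ (B : Set α) (M : Set β), B.Finite → (FRsups sat (ModelsOf sat B ∪ M)).Nonempty) ↔
      ∀ M : Set β, (∃ M' ∈ FRsets sat, M' ⊆ M) → (FRsups sat M).Nonempty := by
  constructor
  · rintro h M ⟨_, ⟨B, hB, rfl⟩, hBM⟩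
    simpa only [Set.union_eq_self_of_subset_left hBM] using h B M hB
  · exact fun h B M hB => h _ ⟨_, modelsOf_mem_FRsets sat hB, Set.subset_union_left⟩

theorem stmt7 (sat : β → Set α → Prop) :
    (∀ (B : Set α) (M : Set β), B.Finite →
        (FRsups sat (ModelsOf sat B ∪ M)).Nonempty) ↔
      ∀ M : Set β,
        M ∈ FRsets sat ∨
        (∃ X ∈ FRsets sat ∪ {M}, M ⊂ X ∧
          ¬ ∃ Z ∈ FRsets sat ∪ {M}, M ⊂ Z ∧ Z ⊂ X) ∨
        ¬ ∃ M' ∈ FRsets sat, M' ⊆ M := by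
  rw [forall_FRsups_modelsOf_union_nonempty_iff]
  refine forall_congr' fun M => ?_
  rw [FRsups_nonempty_iff, imp_iff_or_not, or_assoc]
  exact Iff.rfl
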